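/- For every t ∈ (0,1), every continuous path γ : [0,1] → Ω̄₂ with γ(0) = (t, t²) and γ(1) = (t, −t²) has length (total variation) at least 2√(t² + t⁴). -/

import Mathlib

/-!
Since `γ` starts above and ends below the horizontal axis, by the intermediate value theorem it
meets the axis at some time `s`. Near the positive half-axis `Ω̄₂` is excluded by the cusp, so
`γ s` lies on the closed negative half-axis, whose distance to both `(t, ±t²)` is at least
`√(t² + t⁴)`. The variation over `[0, s]` and over `[s, 1]` each dominate one of these distances.
-/

open Set Metric ENNReal

/-- A point of the plane with given coordinates. -/
noncomputable def mk2 (x y : ℝ) : EuclideanSpace ℝ (Fin 2) :=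
  (WithLp.equiv 2 (Fin 2 → ℝ)).symm ![x, y]

/-- The open square `(-1, 1)²`. -/
def SquareSet : Set (EuclideanSpace ℝ (Fin 2)) :=
  {z | z 0 ∈ Set.Ioo (-1:ℝ) 1 ∧ z 1 ∈ Set.Ioo (-1:ℝ) 1}

/-- `Ω₂`: the square with a closed inward cusp removed. -/
def Omega2 : Set (EuclideanSpace ℝ (Fin 2)) :=
  SquareSet \ {z | 0 ≤ z 0 ∧ z 0 ≤ 1 ∧ |z 1| ≤ (z 0) ^ 2}

theorem eVariationOn.edist_add_edist_le {α E : Type*} [LinearOrder α] [PseudoEMetricSpace E]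
    (f : α → E) {a b c : α} (hab : a ≤ b) (hbc : b ≤ c) :
    edist (f a) (f b) + edist (f b) (f c) ≤ eVariationOn f (Icc a c) := by
  calc edist (f a) (f b) + edist (f b) (f c)
      ≤ eVariationOn f (univ ∩ Icc a b) + eVariationOn f (univ ∩ Icc b c) :=
        add_le_add (eVariationOn.edist_le f ⟨trivial, le_rfl, hab⟩ ⟨trivial, hab, le_rfl⟩)
          (eVariationOn.edist_le f ⟨trivial, le_rfl, hbc⟩ ⟨trivial, hbc, le_rfl⟩)
    _ = eVariationOn f (Icc a c) := by
        rw [eVariationOn.Icc_add_Icc f hab hbc (mem_univ b), univ_inter]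

@[simp] lemma mk2_apply_zero (x y : ℝ) : mk2 x y 0 = x := rfl

@[simp] lemma mk2_apply_one (x y : ℝ) : mk2 x y 1 = y := rfl

lemma sqrt_sq_add_sq_le_dist_mk2 {x y : ℝ} (hx : 0 ≤ x) {z : EuclideanSpace ℝ (Fin 2)}
    (hz0 : z 0 ≤ 0) (hz1 : z 1 = 0) : √(x ^ 2 + y ^ 2) ≤ dist (mk2 x y) z := by
  rw [EuclideanSpace.dist_eq, Fin.sum_univ_two, mk2_apply_zero, mk2_apply_one, hz1,
    Real.dist_eq, Real.dist_eq, sq_abs, sq_abs]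
  exact Real.sqrt_le_sqrt (by nlinarith)

lemma sq_le_abs_of_mem_closure_Omega2 {z : EuclideanSpace ℝ (Fin 2)} (hz : z ∈ closure Omega2)
    (hz0 : 0 < z 0) : z 0 ^ 2 ≤ |z 1| := by
  set cusp : Set (EuclideanSpace ℝ (Fin 2)) := {w | 0 < w 0 ∧ |w 1| < w 0 ^ 2}
  have hcont0 : Continuous fun w : EuclideanSpace ℝ (Fin 2) => w 0 :=
    (EuclideanSpace.proj (0 : Fin 2)).continuous
  have hcont1 : Continuous fun w : EuclideanSpace ℝ (Fin 2) => w 1 :=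
    (EuclideanSpace.proj (1 : Fin 2)).continuous
  have hopen : IsOpen cusp :=
    (isOpen_lt continuous_const hcont0).inter (isOpen_lt hcont1.abs (hcont0.pow 2))
  have hdisj : Disjoint Omega2 cusp := by
    refine disjoint_left.2 fun w ⟨⟨hw, _⟩, hnot⟩ ⟨hw0, hw1⟩ => hnot ?_
    exact ⟨hw0.le, hw.2.le, hw1.le⟩
  by_contra! h
  exact disjoint_left.1 (hdisj.closure_left hopen) hz ⟨hz0, h⟩

/-- Any continuous path in `Ω̄₂` joining `(t, t²)` to `(t, -t²)` has
length at least `2√(t² + t⁴)`. -/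
theorem path_length_lower_bound (t : ℝ) (ht : t ∈ Set.Ioo (0:ℝ) 1)
    (γ : ℝ → EuclideanSpace ℝ (Fin 2))
    (hγ : ContinuousOn γ (Set.Icc 0 1))
    (hmem : ∀ s ∈ Set.Icc (0:ℝ) 1, γ s ∈ closure Omega2)
    (h0 : γ 0 = mk2 t (t ^ 2)) (h1 : γ 1 = mk2 t (-(t ^ 2))) :
    ENNReal.ofReal (2 * Real.sqrt (t ^ 2 + t ^ 4)) ≤ eVariationOn γ (Set.Icc 0 1) := by
  have hcont1 : ContinuousOn (fun s => γ s 1) (Icc 0 1) :=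
    (EuclideanSpace.proj (1 : Fin 2)).continuous.comp_continuousOn hγ
  have hsign : (0 : ℝ) ∈ Icc (γ 1 1) (γ 0 1) := by
    simp only [h0, h1, mk2_apply_one]
    constructor <;> nlinarith
  obtain ⟨s, hs, hγs1 : γ s 1 = 0⟩ := intermediate_value_Icc' zero_le_one hcont1 hsign
  have hγs0 : γ s 0 ≤ 0 := by
    by_contra! hpos
    have := sq_le_abs_of_mem_closure_Omega2 (hmem s hs) hpos
    rw [hγs1, abs_zero] at this
    exact (pow_pos hpos 2).not_ge this
  have hdist (u : ℝ) (hu : u ^ 2 = t ^ 4) : √(t ^ 2 + t ^ 4) ≤ dist (mk2 t u) (γ s) :=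
    hu ▸ sqrt_sq_add_sq_le_dist_mk2 ht.1.le hγs0 hγs1
  have hd0 := hdist (t ^ 2) (by ring)
  have hd1 := hdist (-(t ^ 2)) (by ring)
  rw [← h0] at hd0
  rw [← h1, dist_comm] at hd1
  calc ENNReal.ofReal (2 * √(t ^ 2 + t ^ 4))
      ≤ ENNReal.ofReal (dist (γ 0) (γ s) + dist (γ s) (γ 1)) := ofReal_le_ofReal (by linarith)
    _ = edist (γ 0) (γ s) + edist (γ s) (γ 1) := by
        rw [edist_dist, edist_dist, ofReal_add dist_nonneg dist_nonneg]
    _ ≤ eVariationOn γ (Icc 0 1) := eVariationOn.edist_add_edist_le γ hs.1 hs.2
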